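/- Let G=(V,E) be a connected finite simple graph with n = |V| and m = |E|, and let k be a positive integer with prf(G) ≤ n−1+k. Suppose that (i) no vertex of G has two or more neighbors of degree 1, and (ii) no vertex of G is k-suppressible. Then n ≤ 12k+6 and m ≤ 13k+5. -/

import Mathlib

variable {V : Type*}

/-- The minimum position (in ordering `α`) over the closed neighborhood of `z`. -/
noncomputable def nbhdMin {n : ℕ} (G : SimpleGraph V) (α : V ≃ Fin n) (z : V) : ℕ :=
  sInf {m : ℕ | ∃ w, (w = z ∨ G.Adj w z) ∧ (α w : ℕ) = m}

/-- The profile of a vertex `z` in the ordering `α`. -/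
noncomputable def vtxProfile {n : ℕ} (G : SimpleGraph V) (α : V ≃ Fin n) (z : V) : ℕ :=
  (α z : ℕ) - nbhdMin G α z

/-- The profile of an ordering `α` of `G`. -/
noncomputable def ordProfile [Fintype V] {n : ℕ} (G : SimpleGraph V) (α : V ≃ Fin n) : ℕ :=
  ∑ z : V, vtxProfile G α z

/-- The profile of a graph `G`. -/
noncomputable def profile (G : SimpleGraph V) [Fintype V] : ℕ :=
  sInf {p : ℕ | ∃ α : V ≃ Fin (Fintype.card V), ordProfile G α = p}
/-- The order of the bridge `uv`: the minimum number of vertices in a connected component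
of `G - uv`. -/
noncomputable def bridgeOrd (G : SimpleGraph V) (u v : V) : ℕ :=
  min ((G.deleteEdges {s(u, v)}).connectedComponentMk u).supp.ncard
      ((G.deleteEdges {s(u, v)}).connectedComponentMk v).supp.ncard
/-- A vertex `v` is `k`-suppressible: (a) `v` forms a trivial bridgeless component (every
edge at `v` is a bridge); (b) `v` has degree 2 or 3; (c) exactly two bridges of order at
least `k + 2` are incident with `v`; (d) the possible third neighbor has degree 1. -/
def KSuppressible (G : SimpleGraph V) [Fintype V] (k : ℕ) (v : V) : Prop :=
  (∀ u : V, G.Adj u v → G.IsBridge s(u, v)) ∧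
  ((G.neighborSet v).ncard = 2 ∨ (G.neighborSet v).ncard = 3) ∧
  (∃ x y : V, x ≠ y ∧ G.Adj x v ∧ G.Adj y v ∧
    k + 2 ≤ bridgeOrd G x v ∧ k + 2 ≤ bridgeOrd G y v ∧
    (∀ u : V, G.Adj u v → k + 2 ≤ bridgeOrd G u v → u = x ∨ u = y) ∧
    (∀ w : V, G.Adj w v → w ≠ x → w ≠ y → (G.neighborSet w).ncard = 1))

set_option linter.unusedSectionVars false

namespace KernelAux

open scoped Classical

section Basic
variable {n : ℕ} (G : SimpleGraph V) (α : V ≃ Fin n)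

lemma nbhdMin_le {z w : V} (h : w = z ∨ G.Adj w z) : nbhdMin G α z ≤ (α w : ℕ) :=
  Nat.sInf_le ⟨w, h, rfl⟩

lemma nbhdMin_le_self (z : V) : nbhdMin G α z ≤ (α z : ℕ) := nbhdMin_le G α (Or.inl rfl)

lemma nbhdMin_spec (z : V) : ∃ w, (w = z ∨ G.Adj w z) ∧ (α w : ℕ) = nbhdMin G α z :=
  Nat.sInf_mem (s := {m : ℕ | ∃ w, (w = z ∨ G.Adj w z) ∧ (α w : ℕ) = m}) ⟨(α z : ℕ), z, Or.inl rfl, rfl⟩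

/-- `z`'s interval covers threshold `j`. -/
def cov (z : V) (j : ℕ) : Prop := nbhdMin G α z ≤ j ∧ j < (α z : ℕ)

end Basic

section Fin
variable [Fintype V] {n : ℕ} (G : SimpleGraph V) (α : V ≃ Fin n)

/-- number of intervals covering threshold `j`. -/
noncomputable def cnt (j : ℕ) : ℕ := (Finset.univ.filter (fun z => cov G α z j)).card

lemma filter_range_eq_Ico (z : V) :
    (Finset.range (n-1)).filter (fun j => cov G α z j)
      = Finset.Ico (nbhdMin G α z) ((α z : ℕ)) := by
  ext j
  simp only [Finset.mem_filter, Finset.mem_range, Finset.mem_Ico]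
  simp only [cov]
  constructor
  · rintro ⟨-, h⟩; exact h
  · rintro ⟨h1, h2⟩
    have hz : (α z : ℕ) < n := (α z).isLt
    exact ⟨by omega, h1, h2⟩

lemma sum_cnt : ∑ j ∈ Finset.range (n - 1), cnt G α j = ordProfile G α := by
  unfold cnt
  calc ∑ j ∈ Finset.range (n - 1), (Finset.univ.filter (fun z => cov G α z j)).card
      = ∑ j ∈ Finset.range (n - 1), ∑ z : V, (if cov G α z j then 1 else 0) := by
        exact Finset.sum_congr rfl fun j _ => Finset.card_filter _ _
    _ = ∑ z : V, ∑ j ∈ Finset.range (n - 1), (if cov G α z j then 1 else 0) :=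
        Finset.sum_comm
    _ = ordProfile G α := by
        unfold ordProfile vtxProfile
        refine Finset.sum_congr rfl fun z _ => ?_
        rw [← Finset.card_filter, filter_range_eq_Ico, Nat.card_Ico]

lemma exists_cov_of_walk {j : ℕ} {a b : V} (p : G.Walk a b)
    (ha : (α a : ℕ) ≤ j) (hb : j < (α b : ℕ)) : ∃ z, cov G α z j := by
  induction p with
  | nil => omega
  | @cons a c b h p ih =>
    by_cases hc : (α c : ℕ) ≤ j
    · exact ih hc hb
    · exact ⟨c, le_trans (nbhdMin_le G α (Or.inr h)) ha, by omega⟩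

lemma exists_cov (hG : G.Connected) {j : ℕ} (hj : j + 1 < n) : ∃ z, cov G α z j := by
  obtain ⟨p⟩ := hG.preconnected (α.symm ⟨j, by omega⟩) (α.symm ⟨j + 1, hj⟩)
  exact exists_cov_of_walk G α p (by simp) (by simp)

lemma cnt_pos (hG : G.Connected) {j : ℕ} (hj : j + 1 < n) : 1 ≤ cnt G α j := by
  obtain ⟨z, hz⟩ := exists_cov G α hG hj
  have : z ∈ Finset.univ.filter (fun z => cov G α z j) := by simp [hz]
  exact Finset.card_pos.mpr ⟨z, this⟩

lemma card_dirty_le {k : ℕ} (hG : G.Connected)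
    (h2 : ∑ j ∈ Finset.range (n - 1), cnt G α j ≤ n - 1 + k) :
    ((Finset.range (n-1)).filter (fun j => 2 ≤ cnt G α j)).card ≤ k := by
  have key : (n - 1) + ((Finset.range (n-1)).filter (fun j => 2 ≤ cnt G α j)).card
      ≤ ∑ j ∈ Finset.range (n - 1), cnt G α j := by
    calc (n-1) + ((Finset.range (n-1)).filter (fun j => 2 ≤ cnt G α j)).card
        = ∑ j ∈ Finset.range (n-1), (1 + if 2 ≤ cnt G α j then 1 else 0) := by
          rw [Finset.sum_add_distrib, Finset.card_filter]
          simp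
      _ ≤ ∑ j ∈ Finset.range (n - 1), cnt G α j := by
          refine Finset.sum_le_sum fun j hj => ?_
          have hj' : j + 1 < n := by
            simp only [Finset.mem_range] at hj; omega
          have := cnt_pos G α hG hj'
          by_cases h : 2 ≤ cnt G α j <;> simp [h] <;> omega
  omega

lemma ncard_low (j : ℕ) (hj : j < n) : ({u : V | (α u : ℕ) ≤ j}).ncard = j + 1 := by
  classical
  rw [Set.ncard_eq_toFinset_card']
  have h1 : ({u : V | (α u : ℕ) ≤ j}).toFinset = Finset.univ.filter (fun u => (α u : ℕ) ≤ j) := by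
    ext u; simp
  rw [h1]
  have h2 : (Finset.univ.filter (fun u : V => (α u : ℕ) ≤ j)).card
      = (Finset.univ.filter (fun p : Fin n => (p : ℕ) ≤ j)).card := by
    refine Finset.card_bij' (fun u _ => α u) (fun p _ => α.symm p) ?_ ?_ ?_ ?_ <;>
      simp
  rw [h2, Finset.card_filter, Fin.sum_univ_eq_sum_range (fun i => if i ≤ j then 1 else 0),
    ← Finset.card_filter]
  have h3 : (Finset.range n).filter (fun i => i ≤ j) = Finset.range (j+1) := by
    ext i; simp; omega
  rw [h3, Finset.card_range]

lemma ncard_high (j : ℕ) (hj : j < n) : ({u : V | j < (α u : ℕ)}).ncard = n - (j + 1) := by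
  classical
  have hcard : Fintype.card V = n := by
    rw [Fintype.card_congr α, Fintype.card_fin]
  rw [Set.ncard_eq_toFinset_card']
  have h1 : ({u : V | j < (α u : ℕ)}).toFinset
      = Finset.univ.filter (fun u => ¬ ((α u : ℕ) ≤ j)) := by
    ext u; simp
  rw [h1]
  have := Finset.card_filter_add_card_filter_not
    (s := (Finset.univ : Finset V)) (p := fun u => (α u : ℕ) ≤ j)
  have hlow := ncard_low α j hj
  rw [Set.ncard_eq_toFinset_card'] at hlow
  have h2 : ({u : V | (α u : ℕ) ≤ j}).toFinset = Finset.univ.filter (fun u => (α u : ℕ) ≤ j) := by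
    ext u; simp
  rw [h2] at hlow
  simp only [Finset.card_univ, hcard] at this
  omega

lemma pos_inj {a b : V} (h : (α a : ℕ) = (α b : ℕ)) : a = b := by
  apply α.injective; exact Fin.ext h


lemma mem_supp_union (G : SimpleGraph V) (x z : V) {u w : V} (p : G.Walk u w)
    (hw : w ∈ ((G.deleteEdges {s(x,z)}).connectedComponentMk x).supp
      ∪ ((G.deleteEdges {s(x,z)}).connectedComponentMk z).supp) :
    u ∈ ((G.deleteEdges {s(x,z)}).connectedComponentMk x).supp
      ∪ ((G.deleteEdges {s(x,z)}).connectedComponentMk z).supp := by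
  induction p with
  | nil => exact hw
  | @cons a c b h p ih =>
    have hc := ih hw
    by_cases he : s(a, c) = s(x, z)
    · rw [Sym2.eq_iff] at he
      rcases he with ⟨rfl, rfl⟩ | ⟨rfl, rfl⟩
      · left; rw [SimpleGraph.ConnectedComponent.mem_supp_iff]
      · right; rw [SimpleGraph.ConnectedComponent.mem_supp_iff]
    · have hadj' : (G.deleteEdges {s(x,z)}).Adj a c := by
        rw [SimpleGraph.deleteEdges_adj]; exact ⟨h, by simpa using he⟩
      have hmk : (G.deleteEdges {s(x,z)}).connectedComponentMk a
          = (G.deleteEdges {s(x,z)}).connectedComponentMk c :=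
        SimpleGraph.ConnectedComponent.eq.mpr hadj'.reachable
      rcases hc with hc | hc <;>
        rw [SimpleGraph.ConnectedComponent.mem_supp_iff] at hc <;>
        [left; right] <;>
        rw [SimpleGraph.ConnectedComponent.mem_supp_iff, hmk, hc]

/-- The main "cut" lemma: at a cleanly-covered threshold `j` whose unique coverer `z`
has its neighborhood minimum exactly at `j`, the edge from the vertex `x` at position
`j` to `z` is a bridge splitting the graph by position. -/
lemma cut_lemma (hG : G.Connected) {j : ℕ} {z x : V}
    (hz : cov G α z j)
    (huniq : ∀ y, cov G α y j → y = z)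
    (hmin : nbhdMin G α z = j)
    (hx : (α x : ℕ) = j) :
    G.Adj x z ∧ G.IsBridge s(x, z) ∧
    ((G.deleteEdges {s(x,z)}).connectedComponentMk x).supp = {u : V | (α u : ℕ) ≤ j} ∧
    ((G.deleteEdges {s(x,z)}).connectedComponentMk z).supp = {u : V | j < (α u : ℕ)} := by
  have hzj : j < (α z : ℕ) := hz.2
  -- x is adjacent to z
  have hadj : G.Adj x z := by
    obtain ⟨w, hw, hwv⟩ := nbhdMin_spec G α z
    rw [hmin] at hwv
    have hwx : w = x := pos_inj α (hwv.trans hx.symm)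
    rcases hw with rfl | hw
    · omega
    · rw [← hwx]; exact hw
  -- crossing pairs are exactly (x, z)
  have hcross : ∀ a b : V, G.Adj a b → (α a : ℕ) ≤ j → j < (α b : ℕ) → a = x ∧ b = z := by
    intro a b hab ha hb
    have hbz : b = z := huniq b ⟨le_trans (nbhdMin_le G α (Or.inr hab)) ha, hb⟩
    subst hbz
    have : j ≤ (α a : ℕ) := hmin ▸ nbhdMin_le G α (Or.inr hab)
    exact ⟨pos_inj α (by omega), rfl⟩
  set G' := G.deleteEdges {s(x,z)} with hG'
  have hG'le : ∀ a b : V, G'.Adj a b → G.Adj a b ∧ s(a,b) ≠ s(x,z) := by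
    intro a b h
    rw [hG', SimpleGraph.deleteEdges_adj] at h
    simpa using h
  have no_up : ∀ a b : V, G'.Adj a b → (α a : ℕ) ≤ j → (α b : ℕ) ≤ j := by
    intro a b h ha
    by_contra hb
    obtain ⟨h1, h2⟩ := hG'le a b h
    obtain ⟨rfl, rfl⟩ := hcross a b h1 ha (by omega)
    exact h2 rfl
  have no_down : ∀ a b : V, G'.Adj a b → j < (α a : ℕ) → j < (α b : ℕ) := by
    intro a b h ha
    by_contra hb
    obtain ⟨h1, h2⟩ := hG'le a b h
    obtain ⟨rfl, rfl⟩ := hcross b a h1.symm (by omega) ha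
    exact h2 (Sym2.eq_swap)
  have low_walk : ∀ {a b : V} (_ : G'.Walk a b), (α a : ℕ) ≤ j → (α b : ℕ) ≤ j := by
    intro a b p
    induction p with
    | nil => exact id
    | cons h p ih => intro ha; exact ih (no_up _ _ h ha)
  have high_walk : ∀ {a b : V} (_ : G'.Walk a b), j < (α a : ℕ) → j < (α b : ℕ) := by
    intro a b p
    induction p with
    | nil => exact id
    | cons h p ih => intro ha; exact ih (no_down _ _ h ha)
  have supp_x_sub : (G'.connectedComponentMk x).supp ⊆ {u : V | (α u : ℕ) ≤ j} := by
    intro u hu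
    rw [SimpleGraph.ConnectedComponent.mem_supp_iff, SimpleGraph.ConnectedComponent.eq] at hu
    obtain ⟨p⟩ := hu.symm
    exact low_walk p (le_of_eq hx)
  have supp_z_sub : (G'.connectedComponentMk z).supp ⊆ {u : V | j < (α u : ℕ)} := by
    intro u hu
    rw [SimpleGraph.ConnectedComponent.mem_supp_iff, SimpleGraph.ConnectedComponent.eq] at hu
    obtain ⟨p⟩ := hu.symm
    exact high_walk p hzj
  have cover : ∀ u : V, u ∈ (G'.connectedComponentMk x).supp ∪ (G'.connectedComponentMk z).supp := by
    intro u
    obtain ⟨p⟩ := hG.preconnected u z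
    exact mem_supp_union G x z p (by right; rw [SimpleGraph.ConnectedComponent.mem_supp_iff])
  have supp_x_eq : (G'.connectedComponentMk x).supp = {u : V | (α u : ℕ) ≤ j} := by
    refine Set.Subset.antisymm supp_x_sub fun u hu => ?_
    rcases cover u with h | h
    · exact h
    · exact absurd (supp_z_sub h) (by simp only [Set.mem_setOf_eq] at hu ⊢; omega)
  have supp_z_eq : (G'.connectedComponentMk z).supp = {u : V | j < (α u : ℕ)} := by
    refine Set.Subset.antisymm supp_z_sub fun u hu => ?_
    rcases cover u with h | h
    · exact absurd (supp_x_sub h) (by simp only [Set.mem_setOf_eq] at hu ⊢; omega)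
    · exact h
  refine ⟨hadj, ?_, supp_x_eq, supp_z_eq⟩
  rw [SimpleGraph.isBridge_iff]
  refine fun hreach => ?_
  have : z ∈ (G'.connectedComponentMk x).supp := by
    rw [SimpleGraph.ConnectedComponent.mem_supp_iff, SimpleGraph.ConnectedComponent.eq]
    exact hreach.symm
  have := supp_x_sub this
  simp only [Set.mem_setOf_eq] at this
  omega

lemma exists_adj (hG : G.Connected) (hn : 1 < Fintype.card V) (w : V) : ∃ u, G.Adj w u := by
  obtain ⟨u, hu⟩ := Fintype.exists_ne_of_one_lt_card hn w
  obtain ⟨p⟩ := hG.preconnected w u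
  cases p with
  | nil => exact absurd rfl hu.symm
  | cons h _ => exact ⟨_, h⟩

/-- A vertex placed just inside a cleanly covered stretch is a leaf hanging on the
unique coverer. -/
lemma interior_leaf (hG : G.Connected) (hn : 1 < Fintype.card V) {j : ℕ} {z : V}
    (hz1 : cov G α z j) (hz2 : cov G α z (j+1))
    (hclean1 : ∀ y, cov G α y j → y = z) (hclean2 : ∀ y, cov G α y (j+1) → y = z)
    {w : V} (hw : (α w : ℕ) = j + 1) :
    G.neighborSet w = {z} ∧ G.Adj z w := by
  have hwz : w ≠ z := by
    intro h; rw [h] at hw; have := hz2.2; omega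
  have hmnw : nbhdMin G α w = j + 1 := by
    have h1 : nbhdMin G α w ≤ j + 1 := hw ▸ nbhdMin_le_self G α w
    rcases Nat.lt_or_ge (nbhdMin G α w) (j+1) with h | h
    · exact absurd (hclean1 w ⟨by omega, by omega⟩) hwz
    · omega
  have hnbr : ∀ u, G.Adj u w → u = z := by
    intro u hu
    have h1 : j + 1 ≤ (α u : ℕ) := hmnw ▸ nbhdMin_le G α (Or.inr hu)
    have h2 : (α u : ℕ) ≠ j + 1 := by
      intro h; exact G.irrefl (pos_inj α (h.trans hw.symm) ▸ hu)
    have h3 : nbhdMin G α u ≤ j + 1 := hw ▸ nbhdMin_le G α (Or.inr hu.symm)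
    exact hclean2 u ⟨h3, by omega⟩
  obtain ⟨u, hu⟩ := exists_adj G hG hn w
  have huz : u = z := hnbr u hu.symm
  subst huz
  refine ⟨?_, hu.symm⟩
  ext y
  simp only [SimpleGraph.mem_neighborSet, Set.mem_singleton_iff]
  exact ⟨fun h => hnbr y h.symm, fun h => h ▸ hu⟩

lemma leaf_supp (G : SimpleGraph V) {l v : V} (hne : G.neighborSet l = {v}) :
    ((G.deleteEdges {s(l,v)}).connectedComponentMk l).supp = {l} := by
  ext u
  simp only [SimpleGraph.ConnectedComponent.mem_supp_iff, Set.mem_singleton_iff]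
  constructor
  · intro hu
    obtain ⟨p⟩ := (SimpleGraph.ConnectedComponent.eq.mp hu).symm
    cases p with
    | nil => rfl
    | cons h p =>
      exfalso
      rw [SimpleGraph.deleteEdges_adj] at h
      have : _ ∈ G.neighborSet l := h.1
      rw [hne, Set.mem_singleton_iff] at this
      exact h.2 (by rw [this]; simp)
  · rintro rfl; rfl

lemma leaf_bridge (G : SimpleGraph V) {l v : V} (hadj : G.Adj l v)
    (hne : G.neighborSet l = {v}) : G.IsBridge s(l, v) := by
  rw [SimpleGraph.isBridge_iff]
  refine fun hreach => ?_
  have : v ∈ ((G.deleteEdges {s(l,v)}).connectedComponentMk l).supp := by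
    rw [SimpleGraph.ConnectedComponent.mem_supp_iff, SimpleGraph.ConnectedComponent.eq]
    exact hreach.symm
  rw [leaf_supp G hne, Set.mem_singleton_iff] at this
  exact G.irrefl (this ▸ hadj)

lemma leaf_bridgeOrd_le (G : SimpleGraph V) {l v : V} (hne : G.neighborSet l = {v}) :
    bridgeOrd G l v ≤ 1 := by
  calc bridgeOrd G l v ≤ ((G.deleteEdges {s(l,v)}).connectedComponentMk l).supp.ncard :=
        min_le_left _ _
    _ = 1 := by rw [leaf_supp G hne, Set.ncard_singleton]

lemma edge_bound : G.edgeSet.ncard ≤ ordProfile G α := by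
  classical
  set P : Finset (V × V) :=
    Finset.univ.filter (fun p => G.Adj p.1 p.2 ∧ (α p.1 : ℕ) < (α p.2 : ℕ)) with hP
  have h1 : G.edgeSet.ncard = P.card := by
    rw [Set.ncard_eq_toFinset_card']
    refine (Finset.card_bij (fun p _ => s(p.1, p.2)) ?_ ?_ ?_).symm
    · intro p hp
      rw [hP, Finset.mem_filter] at hp
      simp only [Set.mem_toFinset, SimpleGraph.mem_edgeSet]
      exact hp.2.1
    · intro p hp q hq hpq
      rw [hP, Finset.mem_filter] at hp hq
      rw [Sym2.eq_iff] at hpq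
      rcases hpq with ⟨h1, h2⟩ | ⟨h1, h2⟩
      · exact Prod.ext h1 h2
      · exfalso
        have hpo := hp.2.2
        have hqo := hq.2.2
        rw [h1, h2] at hpo
        omega
    · intro e he
      simp only [Set.mem_toFinset] at he
      induction e with
      | _ a b =>
        rw [SimpleGraph.mem_edgeSet] at he
        have hab : (α a : ℕ) ≠ (α b : ℕ) := fun h => G.ne_of_adj he (pos_inj α h)
        rcases Nat.lt_or_ge (α a : ℕ) (α b : ℕ) with h | h
        · have hm : (a, b) ∈ P := by
            rw [hP, Finset.mem_filter]; exact ⟨Finset.mem_univ _, he, h⟩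
          exact ⟨(a, b), hm, rfl⟩
        · have hm : (b, a) ∈ P := by
            rw [hP, Finset.mem_filter]
            refine ⟨Finset.mem_univ _, he.symm, ?_⟩
            show (α b : ℕ) < (α a : ℕ)
            omega
          exact ⟨(b, a), hm, Sym2.eq_swap⟩
  have h2 : P.card = ∑ z : V, (P.filter (fun p => p.2 = z)).card :=
    Finset.card_eq_sum_card_fiberwise (fun p _ => Finset.mem_univ p.2)
  have h3 : ∀ z : V, (P.filter (fun p => p.2 = z)).card ≤ vtxProfile G α z := by
    intro z
    have := Finset.card_le_card_of_injOn (s := P.filter (fun p => p.2 = z))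
      (f := fun p : V × V => (α p.1 : ℕ))
      (t := Finset.Ico (nbhdMin G α z) ((α z : ℕ))) ?_ ?_
    · calc (P.filter (fun p => p.2 = z)).card
          ≤ (Finset.Ico (nbhdMin G α z) ((α z : ℕ))).card := this
        _ = vtxProfile G α z := by rw [Nat.card_Ico]; rfl
    · intro p hp
      rw [Finset.mem_coe, Finset.mem_filter, hP, Finset.mem_filter] at hp
      obtain ⟨⟨-, hadj, hlt⟩, h2z⟩ := hp
      rw [h2z] at hadj hlt
      exact Finset.mem_Ico.mpr ⟨nbhdMin_le G α (Or.inr hadj), hlt⟩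
    · intro p hp q hq hpq
      rw [Finset.mem_coe, Finset.mem_filter] at hp hq
      exact Prod.ext (pos_inj α hpq) (hp.2.trans hq.2.symm)
  calc G.edgeSet.ncard = ∑ z : V, (P.filter (fun p => p.2 = z)).card := by rw [h1, h2]
    _ ≤ ∑ z : V, vtxProfile G α z := Finset.sum_le_sum (fun z _ => h3 z)
    _ = ordProfile G α := rfl

end Fin
end KernelAux

open KernelAux in
/-- Theorem 4.4 (kernel size): if no vertex has two or more degree-one neighbors and no
vertex is `k`-suppressible, then `n ≤ 12k + 6` and `m ≤ 13k + 5`. -/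
theorem kernel_size_bound [Fintype V] (G : SimpleGraph V) (hG : G.Connected)
    (k : ℕ) (hk : 1 ≤ k)
    (hprf : profile G ≤ Fintype.card V - 1 + k)
    (hrule1 : ∀ x : V, ({w : V | G.Adj x w ∧ (G.neighborSet w).ncard = 1}).ncard ≤ 1)
    (hrule2 : ∀ v : V, ¬ KSuppressible G k v) :
    Fintype.card V ≤ 12 * k + 6 ∧ G.edgeSet.ncard ≤ 13 * k + 5 := by
  classical
  haveI : Nonempty V := hG.nonempty
  have hnpos : 1 ≤ Fintype.card V := Fintype.card_pos
  obtain ⟨α, hα⟩ : ∃ β : V ≃ Fin (Fintype.card V), ordProfile G β = profile G :=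
    Nat.sInf_mem (s := {p : ℕ | ∃ β : V ≃ Fin (Fintype.card V), ordProfile G β = p})
      ⟨ordProfile G (Fintype.equivFin V), Fintype.equivFin V, rfl⟩
  have main : Fintype.card V ≤ 7 * k + 6 := by
    by_contra hbig
    push_neg at hbig
    have hn7 : 7 * k + 7 ≤ Fintype.card V := hbig
    have h1lt : 1 < Fintype.card V := by omega
    have hsum : ∑ j ∈ Finset.range (Fintype.card V - 1), cnt G α j
        ≤ Fintype.card V - 1 + k := by
      rw [sum_cnt, hα]; exact hprf
    have hD : ((Finset.range (Fintype.card V - 1)).filter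
        (fun j => 2 ≤ cnt G α j)).card ≤ k := card_dirty_le G α hG hsum
    -- find a clean window of 5 consecutive thresholds
    have hwin : ∃ i, i ≤ k ∧ ∀ t, k + 5*i ≤ t → t ≤ k + 5*i + 4 → cnt G α t ≤ 1 := by
      by_contra hcon
      push_neg at hcon
      choose f hf1 hf2 hf3 using hcon
      have hinj : (Finset.range (k+1)).card ≤
          ((Finset.range (Fintype.card V - 1)).filter (fun j => 2 ≤ cnt G α j)).card := by
        refine Finset.card_le_card_of_injOn
          (f := fun i => if h : i ≤ k then f i h else 0) ?_ ?_
        · intro i hi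
          rw [Finset.mem_coe, Finset.mem_range] at hi
          have hik : i ≤ k := by omega
          show (if h : i ≤ k then f i h else 0) ∈ _
          rw [dif_pos hik, Finset.mem_coe, Finset.mem_filter, Finset.mem_range]
          refine ⟨by have := hf2 i hik; omega, hf3 i hik⟩
        · intro i hi j hj hij
          rw [Finset.mem_coe, Finset.mem_range] at hi hj
          have hik : i ≤ k := by omega
          have hjk : j ≤ k := by omega
          have hij' : (if h : i ≤ k then f i h else 0) = (if h : j ≤ k then f j h else 0) := hij
          rw [dif_pos hik, dif_pos hjk] at hij'
          rename' hij' => hij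
          have h1 := hf1 i hik; have h2 := hf2 i hik
          have h3 := hf1 j hjk; have h4 := hf2 j hjk
          omega
      rw [Finset.card_range] at hinj
      omega
    obtain ⟨i, hik, hclean⟩ := hwin
    set s := k + 5*i with hsdef
    have hs1 : k ≤ s := by omega
    have hs2 : s ≤ 6*k := by omega
    have huniq : ∀ t, s ≤ t → t ≤ s + 4 →
        ∀ y z : V, cov G α y t → cov G α z t → y = z := by
      intro t h1 h2 y z hy hz
      have hc := hclean t h1 h2
      unfold cnt at hc
      exact Finset.card_le_one.mp hc y (by simp [hy]) z (by simp [hz])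
    -- the first coverer z1
    obtain ⟨z1, hz1⟩ := exists_cov G α hG (j := s) (by omega)
    set b1 := (α z1 : ℕ) with hb1def
    have hb1gt : s < b1 := hz1.2
    have hb1lt : b1 < Fintype.card V := (α z1).isLt
    have hb1le : b1 ≤ s + 2 := by
      by_contra hb
      push_neg at hb
      have hcov1 : cov G α z1 (s+1) := ⟨le_trans hz1.1 (by omega), by omega⟩
      have hcov2 : cov G α z1 (s+2) := ⟨le_trans hz1.1 (by omega), by omega⟩
      have hL1 := interior_leaf G α hG h1lt hz1 hcov1
        (fun y hy => huniq s (le_refl s) (by omega) y z1 hy hz1)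
        (fun y hy => huniq (s+1) (by omega) (by omega) y z1 hy hcov1)
        (w := α.symm ⟨s+1, by omega⟩) (by simp)
      have hL2 := interior_leaf G α hG h1lt hcov1 hcov2
        (fun y hy => huniq (s+1) (by omega) (by omega) y z1 hy hcov1)
        (fun y hy => huniq (s+2) (by omega) (by omega) y z1 hy hcov2)
        (w := α.symm ⟨s+2, by omega⟩) (by simp)
      have hne : α.symm ⟨s+1, by omega⟩ ≠ α.symm ⟨s+2, by omega⟩ := by
        intro h
        have := congrArg (fun x => (α x : ℕ)) h
        simpa using this
      have h2lt : 1 < ({w : V | G.Adj z1 w ∧ (G.neighborSet w).ncard = 1}).ncard := by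
        rw [Set.one_lt_ncard_iff (Set.toFinite _)]
        exact ⟨_, _, ⟨hL1.2, by rw [hL1.1]; exact Set.ncard_singleton _⟩,
          ⟨hL2.2, by rw [hL2.1]; exact Set.ncard_singleton _⟩, hne⟩
      have := hrule1 z1
      omega
    -- the middle coverer v
    obtain ⟨v, hv⟩ := exists_cov G α hG (j := b1) (by omega)
    have hmnv : nbhdMin G α v = b1 := by
      rcases Nat.lt_or_ge (nbhdMin G α v) b1 with h | h
      · exfalso
        have hcv : cov G α v (b1 - 1) := ⟨by omega, by have := hv.2; omega⟩
        have hcz : cov G α z1 (b1 - 1) := ⟨by have := hz1.1; omega, by omega⟩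
        have hvz := huniq (b1-1) (by omega) (by omega) v z1 hcv hcz
        rw [hvz] at hv
        have := hv.2; omega
      · exact le_antisymm hv.1 h
    set b2 := (α v : ℕ) with hb2def
    have hb2gt : b1 < b2 := hv.2
    have hb2lt : b2 < Fintype.card V := (α v).isLt
    have hb2le : b2 ≤ b1 + 2 := by
      by_contra hb
      push_neg at hb
      have hcov1 : cov G α v (b1+1) := ⟨by omega, by omega⟩
      have hcov2 : cov G α v (b1+2) := ⟨by omega, by omega⟩
      have hL1 := interior_leaf G α hG h1lt hv hcov1
        (fun y hy => huniq b1 (by omega) (by omega) y v hy hv)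
        (fun y hy => huniq (b1+1) (by omega) (by omega) y v hy hcov1)
        (w := α.symm ⟨b1+1, by omega⟩) (by simp)
      have hL2 := interior_leaf G α hG h1lt hcov1 hcov2
        (fun y hy => huniq (b1+1) (by omega) (by omega) y v hy hcov1)
        (fun y hy => huniq (b1+2) (by omega) (by omega) y v hy hcov2)
        (w := α.symm ⟨b1+2, by omega⟩) (by simp)
      have hne : α.symm ⟨b1+1, by omega⟩ ≠ α.symm ⟨b1+2, by omega⟩ := by
        intro h
        have := congrArg (fun x => (α x : ℕ)) h
        simpa using this
      have h2lt : 1 < ({w : V | G.Adj v w ∧ (G.neighborSet w).ncard = 1}).ncard := by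
        rw [Set.one_lt_ncard_iff (Set.toFinite _)]
        exact ⟨_, _, ⟨hL1.2, by rw [hL1.1]; exact Set.ncard_singleton _⟩,
          ⟨hL2.2, by rw [hL2.1]; exact Set.ncard_singleton _⟩, hne⟩
      have := hrule1 v
      omega
    -- the coverer w after v
    obtain ⟨w, hw⟩ := exists_cov G α hG (j := b2) (by omega)
    have hmnw : nbhdMin G α w = b2 := by
      rcases Nat.lt_or_ge (nbhdMin G α w) b2 with h | h
      · exfalso
        have hcw : cov G α w (b2 - 1) := ⟨by omega, by have := hw.2; omega⟩
        have hcv : cov G α v (b2 - 1) := ⟨by omega, by omega⟩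
        have hwv := huniq (b2-1) (by omega) (by omega) w v hcw hcv
        rw [hwv] at hw
        have := hw.2; omega
      · exact le_antisymm hw.1 h
    -- the two cuts
    obtain ⟨hadj_z1v, hbr1, hsupp1x, hsupp1z⟩ := cut_lemma G α hG (z := v) (x := z1) hv
      (fun y hy => huniq b1 (by omega) (by omega) y v hy hv) hmnv hb1def.symm
    obtain ⟨hadj_vw, hbr2, hsupp2x, hsupp2z⟩ := cut_lemma G α hG (z := w) (x := v) hw
      (fun y hy => huniq b2 (by omega) (by omega) y w hy hw) hmnw hb2def.symm
    have hadj_wv : G.Adj w v := hadj_vw.symm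
    have hz1w : z1 ≠ w := by
      intro h
      have h1 := hw.2
      rw [← h] at h1
      omega
    -- classify the neighbours of v
    have hnbr : ∀ u, G.Adj u v →
        u = z1 ∨ u = w ∨ (G.neighborSet u = {v} ∧ (α u : ℕ) = b1 + 1) := by
      intro u hu
      have hge : b1 ≤ (α u : ℕ) := hmnv ▸ nbhdMin_le G α (Or.inr hu)
      have hneb2 : (α u : ℕ) ≠ b2 := by
        intro h
        exact G.irrefl ((pos_inj α (h.trans hb2def) : u = v) ▸ hu)
      by_cases h1 : (α u : ℕ) = b1
      · exact Or.inl (pos_inj α (h1.trans hb1def))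
      · by_cases h2 : b2 < (α u : ℕ)
        · refine Or.inr (Or.inl ?_)
          have hcu : cov G α u b2 := ⟨le_trans (nbhdMin_le G α (Or.inr hu.symm)) (by omega), h2⟩
          exact huniq b2 (by omega) (by omega) u w hcu hw
        · have hint : (α u : ℕ) = b1 + 1 := by omega
          have hcov1 : cov G α v (b1+1) := ⟨by omega, by omega⟩
          have hL := interior_leaf G α hG h1lt hv hcov1
            (fun y hy => huniq b1 (by omega) (by omega) y v hy hv)
            (fun y hy => huniq (b1+1) (by omega) (by omega) y v hy hcov1)
            (w := u) hint
          exact Or.inr (Or.inr ⟨hL.1, hint⟩)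
    -- the two bridge orders
    have hord1 : k + 2 ≤ bridgeOrd G z1 v := by
      unfold bridgeOrd
      rw [hsupp1x, hsupp1z, ncard_low α b1 (by omega), ncard_high α b1 (by omega)]
      refine le_min (by omega) (by omega)
    have hord2 : k + 2 ≤ bridgeOrd G w v := by
      unfold bridgeOrd
      rw [(Sym2.eq_swap : s(w,v) = s(v,w)), hsupp2z, hsupp2x,
        ncard_low α b2 (by omega), ncard_high α b2 (by omega)]
      refine le_min (by omega) (by omega)
    -- the degree of v
    have hncard : (G.neighborSet v).ncard = 2 ∨ (G.neighborSet v).ncard = 3 := by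
      by_cases hl : ∃ u, G.Adj u v ∧ u ≠ z1 ∧ u ≠ w
      · right
        obtain ⟨l, hlv, hlz, hlw⟩ := hl
        obtain (h|h|h) := hnbr l hlv
        · exact absurd h hlz
        · exact absurd h hlw
        rw [Set.ncard_eq_three]
        refine ⟨z1, w, l, hz1w, fun he => hlz he.symm, fun he => hlw he.symm, ?_⟩
        ext u
        simp only [SimpleGraph.mem_neighborSet, Set.mem_insert_iff, Set.mem_singleton_iff]
        constructor
        · intro hu
          rcases hnbr u hu.symm with h'|h'|h'
          · exact Or.inl h'
          · exact Or.inr (Or.inl h')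
          · exact Or.inr (Or.inr (pos_inj α (h'.2.trans h.2.symm)))
        · rintro (rfl|rfl|rfl)
          · exact hadj_z1v.symm
          · exact hadj_vw
          · exact hlv.symm
      · left
        push_neg at hl
        have hset : G.neighborSet v = {z1, w} := by
          ext u
          simp only [SimpleGraph.mem_neighborSet, Set.mem_insert_iff, Set.mem_singleton_iff]
          constructor
          · intro hu
            by_cases h1 : u = z1
            · exact Or.inl h1
            · exact Or.inr (hl u hu.symm h1)
          · rintro (rfl|rfl)
            · exact hadj_z1v.symm
            · exact hadj_vw
        rw [hset, Set.ncard_pair hz1w]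
    -- v is k-suppressible: contradiction
    refine hrule2 v ⟨?_, hncard, z1, w, hz1w, hadj_z1v, hadj_wv, hord1, hord2, ?_, ?_⟩
    · intro u hu
      rcases hnbr u hu with h|h|⟨hnb,-⟩
      · rw [h]; exact hbr1
      · rw [h, (Sym2.eq_swap : s(w,v) = s(v,w))]; exact hbr2
      · exact leaf_bridge G hu hnb
    · intro u hu hord
      rcases hnbr u hu with h|h|⟨hnb,-⟩
      · exact Or.inl h
      · exact Or.inr h
      · exfalso
        have := leaf_bridgeOrd_le G hnb
        omega
    · intro u hu hu1 hu2
      rcases hnbr u hu with h|h|⟨hnb,-⟩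
      · exact absurd h hu1
      · exact absurd h hu2
      · rw [hnb]; exact Set.ncard_singleton _
  have hm : G.edgeSet.ncard ≤ profile G := hα ▸ edge_bound G α
  exact ⟨by omega, by omega⟩
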